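/- arXiv:1612.07591 — 5 statements merged into one kernel-verified Lean document; each statement's English description precedes it below -/
import Mathlib

section
/- J(x) = (1-x)·H(x) + x·H(xq), where J(x) = Σ_{n≥0} (-x)^n q^{C(n,2)} / ((q;q)_n (xq;q)_n) and H(x) = Σ_{n≥0} (-x)^n q^{C(n,2)} / ((q;q)_n (x;q)_n), as formal power series in x over the field of rational functions in q (or as an identity of formal power series in x and q). -/
/-! The identity holds term by term: from `(x;q)_n (1 - q^n x) = (1 - x) (xq;q)_n` one gets
`1/(xq;q)_n = (1-x)/(x;q)_n + x · q^n/(xq;q)_n`, and `xⁿ qⁿ/(xq;q)_n` is `xⁿ/(x;q)_n` with `x`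
replaced by `xq`. Multiplication by a power series and the substitution `x ↦ xq` act termwise on
`X`-adically convergent sums `∑ aₙ xⁿ fₙ(x)`, so summing over `n` gives the identity. -/

open PowerSeries

noncomputable section
namespace FC

/-- The field `ℚ(q)` of rational functions in `q`. -/
abbrev K : Type := RatFunc ℚ

/-- The variable `q`. -/
def q : K := RatFunc.X

/-- The q-Pochhammer symbol `(a; q)_n = ∏_{i=0}^{n-1} (1 - a q^i)`. -/
def poch (a : K) (n : ℕ) : K := ∏ i ∈ Finset.range n, (1 - a * q ^ i)

/-- The power series `(x q^s; q)_n = ∏_{i=0}^{n-1} (1 - q^{s+i} x)` in the variable `x`. -/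
def pochX (s n : ℕ) : PowerSeries K :=
  ∏ i ∈ Finset.range n, (1 - PowerSeries.C (q ^ (s + i)) * PowerSeries.X)

/-- `J(x) = Σ_{n≥0} (-x)^n q^{C(n,2)} / ((q;q)_n (xq;q)_n)`, defined coefficientwise:
the coefficient of `x^N` is `Σ_{n=0}^{N} (-1)^n q^{C(n,2)}/(q;q)_n · [x^{N-n}] (xq;q)_n⁻¹`. -/
def J : PowerSeries K :=
  PowerSeries.mk fun N => ∑ n ∈ Finset.range (N + 1),
    ((-1 : K) ^ n * q ^ n.choose 2 / poch q n) * PowerSeries.coeff (N - n) (pochX 1 n)⁻¹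

/-- `H(x) = Σ_{n≥0} (-x)^n q^{C(n,2)} / ((q;q)_n (x;q)_n)`. -/
def H : PowerSeries K :=
  PowerSeries.mk fun N => ∑ n ∈ Finset.range (N + 1),
    ((-1 : K) ^ n * q ^ n.choose 2 / poch q n) * PowerSeries.coeff (N - n) (pochX 0 n)⁻¹

end FC

namespace PowerSeries

open Finset

variable {R : Type*} [CommRing R]

/-- The `X`-adically convergent sum `∑ₙ aₙ Xⁿ fₙ`, defined coefficientwise. -/
def xPowSum (a : ℕ → R) (f : ℕ → R⟦X⟧) : R⟦X⟧ :=
  mk fun N => ∑ n ∈ range (N + 1), a n * coeff (N - n) (f n)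

theorem eq_of_forall_X_pow_dvd_sub {φ ψ : R⟦X⟧} (h : ∀ M, X ^ M ∣ φ - ψ) : φ = ψ := by
  ext N
  simpa [sub_eq_zero] using X_pow_dvd_iff.1 (h (N + 1)) N N.lt_succ_self

theorem X_pow_dvd_xPowSum_sub (a : ℕ → R) (f : ℕ → R⟦X⟧) (M : ℕ) :
    X ^ M ∣ xPowSum a f - ∑ n ∈ range M, C (a n) * (X ^ n * f n) := by
  refine X_pow_dvd_iff.2 fun m hm => ?_
  have hrange : (range M).filter (· ≤ m) = range (m + 1) := by
    ext n; simp only [mem_filter, mem_range]; omega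
  simp only [xPowSum, map_sub, map_sum, coeff_mk, coeff_C_mul, coeff_X_pow_mul', mul_ite,
    mul_zero, ← sum_filter, hrange, sub_self]

theorem mul_xPowSum (φ : R⟦X⟧) (a : ℕ → R) (f : ℕ → R⟦X⟧) :
    φ * xPowSum a f = xPowSum a (fun n => φ * f n) := by
  refine eq_of_forall_X_pow_dvd_sub fun M => ?_
  have hsum : φ * ∑ n ∈ range M, C (a n) * (X ^ n * f n)
      = ∑ n ∈ range M, C (a n) * (X ^ n * (φ * f n)) := by
    rw [mul_sum]; exact sum_congr rfl fun n _ => by ring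
  have h := dvd_sub (dvd_mul_of_dvd_right (X_pow_dvd_xPowSum_sub a f M) φ)
    (X_pow_dvd_xPowSum_sub a (fun n => φ * f n) M)
  rwa [mul_sub, hsum, sub_sub_sub_cancel_right] at h

theorem xPowSum_add (a : ℕ → R) (f g : ℕ → R⟦X⟧) :
    xPowSum a f + xPowSum a g = xPowSum a (fun n => f n + g n) := by
  ext N
  simp only [xPowSum, map_add, coeff_mk, mul_add, sum_add_distrib]

theorem rescale_xPowSum (r : R) (a : ℕ → R) (f : ℕ → R⟦X⟧) :
    rescale r (xPowSum a f) = xPowSum a (fun n => C (r ^ n) * rescale r (f n)) := by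
  ext N
  simp only [xPowSum, coeff_rescale, coeff_mk, coeff_C_mul, mul_sum]
  refine sum_congr rfl fun n hn => ?_
  rw [← pow_mul_pow_sub r (Nat.lt_succ_iff.1 (mem_range.1 hn))]
  ring

theorem rescale_C (r b : R) : rescale r (C b) = C b := by
  ext (_ | n) <;> simp [coeff_C]

end PowerSeries

namespace FC

theorem constantCoeff_pochX (s n : ℕ) : constantCoeff (pochX s n) = 1 := by
  simp [pochX, map_prod]

theorem rescale_pochX_zero (n : ℕ) : rescale q (pochX 0 n) = pochX 1 n := by
  simp only [pochX, map_prod, map_sub, map_one, map_mul, rescale_C, rescale_X]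
  refine Finset.prod_congr rfl fun i _ => ?_
  rw [← mul_assoc, ← map_mul, ← pow_succ, zero_add, add_comm 1 i]

theorem rescale_inv_pochX_zero (n : ℕ) : rescale q (pochX 0 n)⁻¹ = (pochX 1 n)⁻¹ := by
  rw [eq_inv_iff_mul_eq_one (by simp [constantCoeff_pochX]), ← rescale_pochX_zero, ← map_mul,
    PowerSeries.inv_mul_cancel _ (by simp [constantCoeff_pochX]), map_one]

theorem pochX_zero_mul (n : ℕ) :
    pochX 0 n * (1 - C (q ^ n) * X) = (1 - X) * pochX 1 n := by
  have h := (Finset.prod_range_succ (fun i => 1 - C (q ^ i) * X) n).symm.trans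
    (Finset.prod_range_succ' (fun i => 1 - C (q ^ i) * X) n)
  rw [pochX, pochX]
  simp only [zero_add, add_comm 1]
  rw [h, pow_zero, map_one, one_mul, mul_comm]

theorem inv_pochX_one (n : ℕ) :
    (pochX 1 n)⁻¹ = (1 - X) * (pochX 0 n)⁻¹ + X * (C (q ^ n) * (pochX 1 n)⁻¹) := by
  have hu := PowerSeries.mul_inv_cancel (pochX 1 n) (by simp [constantCoeff_pochX])
  have hv := PowerSeries.mul_inv_cancel (pochX 0 n) (by simp [constantCoeff_pochX])
  rw [inv_eq_iff_mul_eq_one (by simp [constantCoeff_pochX])]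
  linear_combination -(pochX 0 n)⁻¹ * pochX_zero_mul n + (1 - C (q ^ n) * X) * hv
    + X * C (q ^ n) * hu

/-- `J(x) = (1-x)·H(x) + x·H(xq)`. -/
theorem stmt0 : J = (1 - PowerSeries.X) * H + PowerSeries.X * rescale q H := by
  change xPowSum _ (fun n => (pochX 1 n)⁻¹) = (1 - X) * xPowSum _ (fun n => (pochX 0 n)⁻¹)
    + X * rescale q (xPowSum _ (fun n => (pochX 0 n)⁻¹))
  simp only [rescale_xPowSum, rescale_inv_pochX_zero, mul_xPowSum, xPowSum_add]
  simp_rw [← inv_pochX_one]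

end FC
end
end

section
/- H(x) = J(x) - x² J(xq) / ((1-x)(1-xq)), where J(x) = Σ_{n≥0} (-x)^n q^{C(n,2)} / ((q;q)_n (xq;q)_n) and H(x) = Σ_{n≥0} (-x)^n q^{C(n,2)} / ((q;q)_n (x;q)_n). -/
/-!
Write `c_n = (-1)^n q^{C(n,2)} / (q;q)_n`, so that `H = Σ c_n xⁿ / (x;q)_n` and
`J = Σ c_n xⁿ / (xq;q)_n`. Termwise, `1/(x;q)_n - 1/(xq;q)_n = x (1 - qⁿ) / (x;q)_{n+1}`, whose
`n = 0` term vanishes. Shifting `n ↦ n + 1`, `c_{n+1} (1 - q^{n+1}) = -qⁿ c_n` and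
`(x;q)_{n+2} = (1 - x)(1 - xq)(xq²;q)_n`, so `(H - J)(1 - x)(1 - xq) = -x² Σ c_n qⁿ xⁿ / (xq²;q)_n`,
which is `-x² J(xq)`. All sums are formal: their `n`-th terms are `O(xⁿ)`.
-/

open PowerSeries

noncomputable section
namespace FC

/-- `K(x) = Σ_{n≥0} (x^n q^{n(n+1)/2} / (xq;q)_n) · Σ_{k=0}^n (-1)^k/(q;q)_k`. -/
def Kq : PowerSeries K :=
  PowerSeries.mk fun N => ∑ n ∈ Finset.range (N + 1),
    (q ^ (n * (n + 1) / 2) * ∑ k ∈ Finset.range (n + 1), (-1 : K) ^ k / poch q k) *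
      PowerSeries.coeff (N - n) (pochX 1 n)⁻¹


section SumXPow

variable {R : Type*}

/-- The `X`-adically convergent sum `Σ_n X^n * g n`, defined coefficientwise. -/
def sumXPow [Semiring R] (g : ℕ → R⟦X⟧) : R⟦X⟧ :=
  mk fun N => ∑ n ∈ Finset.range (N + 1), coeff (N - n) (g n)

theorem coeff_sumXPow [Semiring R] (g : ℕ → R⟦X⟧) (N : ℕ) :
    coeff N (sumXPow g) = ∑ n ∈ Finset.range (N + 1), coeff (N - n) (g n) :=
  coeff_mk _ _

theorem coeff_sumXPow_eq_coeff_sum [Semiring R] (g : ℕ → R⟦X⟧) {N M : ℕ} (h : N < M) :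
    coeff N (sumXPow g) = coeff N (∑ n ∈ Finset.range M, X ^ n * g n) := by
  rw [coeff_sumXPow, map_sum]
  simp_rw [coeff_X_pow_mul']
  rw [← Finset.sum_range_add_sum_Ico _ (show N + 1 ≤ M by omega),
    Finset.sum_congr rfl fun n hn => if_pos (Nat.lt_succ_iff.1 (Finset.mem_range.1 hn)),
    Finset.sum_eq_zero fun n hn => if_neg (by simp at hn; omega), add_zero]

theorem sumXPow_sub [Ring R] (f g : ℕ → R⟦X⟧) :
    sumXPow (fun n => f n - g n) = sumXPow f - sumXPow g := by
  ext N
  simp only [coeff_sumXPow, map_sub, Finset.sum_sub_distrib]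

theorem sumXPow_neg [Ring R] (g : ℕ → R⟦X⟧) :
    sumXPow (fun n => -g n) = -sumXPow g := by
  ext N
  simp only [coeff_sumXPow, map_neg, Finset.sum_neg_distrib]

theorem sumXPow_mul [Semiring R] (g : ℕ → R⟦X⟧) (φ : R⟦X⟧) :
    sumXPow g * φ = sumXPow fun n => g n * φ := by
  ext N
  rw [coeff_sumXPow_eq_coeff_sum (M := N + 1) _ (by omega), Finset.sum_congr rfl fun n _ =>
    (mul_assoc (X ^ n) (g n) φ).symm, ← Finset.sum_mul, coeff_mul, coeff_mul]
  refine Finset.sum_congr rfl fun p hp => ?_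
  rw [coeff_sumXPow_eq_coeff_sum (M := N + 1) _ (by simp at hp; omega)]

theorem sumXPow_eq_add_X_mul [Semiring R] (g : ℕ → R⟦X⟧) :
    sumXPow g = g 0 + X * sumXPow fun n => g (n + 1) := by
  ext (_ | N)
  · simp [coeff_sumXPow]
  · rw [coeff_sumXPow, Finset.sum_range_succ', map_add, coeff_succ_X_mul, coeff_sumXPow,
      add_comm, Nat.sub_zero]
    simp only [Nat.add_sub_add_right]

theorem rescale_sumXPow [CommSemiring R] (a : R) (g : ℕ → R⟦X⟧) :
    rescale a (sumXPow g) = sumXPow fun n => C (a ^ n) * rescale a (g n) := by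
  ext N
  simp only [coeff_rescale, coeff_sumXPow, coeff_C_mul, Finset.mul_sum]
  refine Finset.sum_congr rfl fun n hn => ?_
  rw [← mul_assoc, ← pow_add, Nat.add_sub_cancel' (by simp at hn; omega)]

end SumXPow

theorem inv_eq_mul_mul_inv {k : Type*} [Field k] (φ : k⟦X⟧) {ψ : k⟦X⟧}
    (hψ : constantCoeff ψ ≠ 0) : φ⁻¹ = ψ * (φ * ψ)⁻¹ := by
  rw [PowerSeries.mul_inv_rev, ← mul_assoc, PowerSeries.mul_inv_cancel _ hψ, one_mul]

theorem rescale_C {R : Type*} [CommSemiring R] (a b : R) : rescale a (C b) = C b := by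
  ext n
  rw [coeff_rescale, coeff_C]
  split_ifs with h <;> simp [h]

theorem rescale_one_sub_C_mul_X {R : Type*} [CommRing R] (a b : R) :
    rescale a (1 - C b * X) = 1 - C (b * a) * X := by
  rw [map_sub, map_one, map_mul, rescale_C, rescale_X, map_mul, mul_assoc]

theorem pochX_succ (s n : ℕ) : pochX s (n + 1) = pochX s n * (1 - C (q ^ (s + n)) * X) :=
  Finset.prod_range_succ _ _

theorem pochX_succ' (s n : ℕ) : pochX s (n + 1) = pochX (s + 1) n * (1 - C (q ^ s) * X) := by
  rw [pochX, Finset.prod_range_succ', add_zero, pochX]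
  simp only [← add_assoc, add_right_comm s]

theorem rescale_pochX (s n : ℕ) : rescale q (pochX s n) = pochX (s + 1) n := by
  simp only [pochX, map_prod, rescale_one_sub_C_mul_X, ← pow_succ, add_right_comm s]

theorem rescale_inv_pochX (s n : ℕ) : rescale q (pochX s n)⁻¹ = (pochX (s + 1) n)⁻¹ := by
  rw [PowerSeries.eq_inv_iff_mul_eq_one (by simp [constantCoeff_pochX]), ← rescale_pochX,
    ← map_mul, PowerSeries.inv_mul_cancel _ (by simp [constantCoeff_pochX]), map_one]

theorem inv_pochX_zero_sub_inv_pochX_one (n : ℕ) :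
    (pochX 0 n)⁻¹ - (pochX 1 n)⁻¹ = C (1 - q ^ n) * X * (pochX 0 (n + 1))⁻¹ := by
  have h₀ : (pochX 0 n)⁻¹ = (1 - C (q ^ n) * X) * (pochX 0 (n + 1))⁻¹ := by
    rw [pochX_succ, zero_add]
    exact inv_eq_mul_mul_inv _ (by simp)
  have h₁ : (pochX 1 n)⁻¹ = (1 - X) * (pochX 0 (n + 1))⁻¹ := by
    rw [pochX_succ', pow_zero, map_one, one_mul]
    exact inv_eq_mul_mul_inv _ (by simp)
  rw [h₀, h₁, map_sub, map_one]
  ring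

theorem inv_pochX_zero_mul (n : ℕ) :
    (pochX 0 (n + 2))⁻¹ * ((1 - X) * (1 - C q * X)) = (pochX 2 n)⁻¹ := by
  have h : pochX 0 (n + 2) = pochX 2 n * ((1 - X) * (1 - C q * X)) := by
    rw [pochX_succ', pochX_succ', pow_zero, pow_one, map_one, one_mul]
    ring
  rw [h, inv_eq_mul_mul_inv (pochX 2 n) (show constantCoeff ((1 - X) * (1 - C q * X)) ≠ 0 by
    simp), mul_comm]

theorem q_pow_ne_one {k : ℕ} (hk : k ≠ 0) : q ^ k ≠ 1 := by
  intro h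
  have hX : (Polynomial.X : Polynomial ℚ) ^ k = 1 :=
    RatFunc.algebraMap_injective ℚ (by rw [map_pow, RatFunc.algebraMap_X, map_one]; exact h)
  simpa [hk] using congrArg Polynomial.natDegree hX

theorem poch_q_ne_zero (n : ℕ) : poch q n ≠ 0 :=
  Finset.prod_ne_zero_iff.2 fun i _ h =>
    q_pow_ne_one (Nat.succ_ne_zero i) (by rw [pow_succ']; exact (sub_eq_zero.1 h).symm)

def eulerCoeff (n : ℕ) : K := (-1) ^ n * q ^ n.choose 2 / poch q n

theorem eulerCoeff_succ_mul (n : ℕ) :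
    eulerCoeff (n + 1) * (1 - q ^ (n + 1)) = -(eulerCoeff n * q ^ n) := by
  have hpoch : poch q (n + 1) = poch q n * (1 - q ^ (n + 1)) := by
    rw [poch, Finset.prod_range_succ, ← pow_succ']
    rfl
  have hq : (1 : K) - q ^ (n + 1) ≠ 0 := sub_ne_zero.2 (q_pow_ne_one n.succ_ne_zero).symm
  have hp : poch q n ≠ 0 := poch_q_ne_zero n
  rw [eulerCoeff, eulerCoeff, hpoch, Nat.choose_succ_succ', Nat.choose_one_right]
  field_simp
  ring

theorem J_eq_sumXPow : J = sumXPow fun n => C (eulerCoeff n) * (pochX 1 n)⁻¹ := by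
  ext N
  simp only [J, coeff_mk, coeff_sumXPow, coeff_C_mul, eulerCoeff]

theorem H_eq_sumXPow : H = sumXPow fun n => C (eulerCoeff n) * (pochX 0 n)⁻¹ := by
  ext N
  simp only [H, coeff_mk, coeff_sumXPow, coeff_C_mul, eulerCoeff]

theorem H_sub_J :
    H - J = X ^ 2 * sumXPow fun n =>
      C (eulerCoeff (n + 1) * (1 - q ^ (n + 1))) * (pochX 0 (n + 2))⁻¹ := by
  have hterm : ∀ n, C (eulerCoeff n) * (pochX 0 n)⁻¹ - C (eulerCoeff n) * (pochX 1 n)⁻¹ =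
      C (eulerCoeff n * (1 - q ^ n)) * (pochX 0 (n + 1))⁻¹ * X := by
    intro n
    rw [← mul_sub, inv_pochX_zero_sub_inv_pochX_one, map_mul]
    ring
  rw [H_eq_sumXPow, J_eq_sumXPow, ← sumXPow_sub]
  simp_rw [hterm]
  rw [sumXPow_eq_add_X_mul, pow_zero, sub_self, mul_zero, map_zero, zero_mul, zero_mul, zero_add,
    ← sumXPow_mul]
  ring

theorem rescale_J : rescale q J = sumXPow fun n => C (eulerCoeff n * q ^ n) * (pochX 2 n)⁻¹ := by
  rw [J_eq_sumXPow, rescale_sumXPow]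
  simp_rw [map_mul, rescale_inv_pochX, rescale_C]
  congr 1
  funext n
  rw [mul_left_comm, mul_assoc]

/-- `H(x) = J(x) - x² J(xq) / ((1-x)(1-xq))`. -/
theorem stmt2 :
    H = J - PowerSeries.X ^ 2 * rescale q J *
        ((1 - PowerSeries.X) * (1 - PowerSeries.C q * PowerSeries.X))⁻¹ := by
  have hP : constantCoeff ((1 - X) * (1 - C q * X) : K⟦X⟧) ≠ 0 := by simp
  suffices (H - J) * ((1 - X) * (1 - C q * X)) = -(X ^ 2 * rescale q J) by
    linear_combination (PowerSeries.eq_mul_inv_iff_mul_eq hP).2 this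
  calc (H - J) * ((1 - X) * (1 - C q * X))
      = X ^ 2 * sumXPow fun n => C (eulerCoeff (n + 1) * (1 - q ^ (n + 1))) *
          ((pochX 0 (n + 2))⁻¹ * ((1 - X) * (1 - C q * X))) := by
        simp_rw [H_sub_J, mul_assoc, sumXPow_mul, mul_assoc]
    _ = X ^ 2 * sumXPow fun n => -(C (eulerCoeff n * q ^ n) * (pochX 2 n)⁻¹) := by
        simp_rw [inv_pochX_zero_mul, eulerCoeff_succ_mul, map_neg, neg_mul]
    _ = -(X ^ 2 * rescale q J) := by
        rw [sumXPow_neg, rescale_J, mul_neg]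

end FC
end
end

section
/- With J-cal(x) = Σ_{n≥0} (-1)^{⌈n/2⌉} x^n q^{n(n-1)/2} / (q²;q²)_{⌊n/2⌋}, one has (1-2x)·J-cal(-xq) = 2·J-cal(x) - J-cal(xq). -/
open PowerSeries

noncomputable section
namespace FC

/-- `(q²;q²)_m = ∏_{i=1}^{m} (1 - q^{2i})`. -/
def poch2 (m : ℕ) : K := ∏ i ∈ Finset.range m, (1 - q ^ (2 * (i + 1)))

/-- `𝒥(x) = Σ_{n≥0} (-1)^{⌈n/2⌉} x^n q^{C(n,2)} / (q²;q²)_{⌊n/2⌋}`. -/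
def Jcal : PowerSeries K :=
  PowerSeries.mk fun n => (-1 : K) ^ ((n + 1) / 2) * q ^ n.choose 2 / poch2 (n / 2)

/-- `𝒦(x) = Σ_{n≥0} x^n q^{n(n+1)/2} Σ_{k=0}^{⌊n/2⌋} (-1)^k/(q²;q²)_k`. -/
def Kcal : PowerSeries K :=
  PowerSeries.mk fun n =>
    q ^ (n * (n + 1) / 2) * ∑ k ∈ Finset.range (n / 2 + 1), (-1 : K) ^ k / poch2 k

/-
Comparing coefficients of `x^(k+1)`, the identity becomes a relation between two consecutive
coefficients `c n` of `𝒥`. It follows from the ratios `c (2m+1) = -q^(2m) c (2m)` and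
`(1 - q^(2m+2)) c (2m+2) = q^(2m+1) c (2m+1)`, which come from `C(n+1, 2) = n + C(n, 2)` and
`(q²;q²)_(m+1) = (q²;q²)_m (1 - q^(2m+2))`.
-/

lemma one_sub_q_pow_ne_zero {n : ℕ} (hn : n ≠ 0) : 1 - q ^ n ≠ 0 := by
  rw [q, ← RatFunc.algebraMap_X, ← map_pow, ← map_one (algebraMap (Polynomial ℚ) K), ← map_sub,
    map_ne_zero_iff _ (RatFunc.algebraMap_injective ℚ), ← neg_sub, neg_ne_zero, ← Polynomial.C_1]
  exact Polynomial.X_pow_sub_C_ne_zero (Nat.pos_of_ne_zero hn) 1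

lemma poch2_succ (m : ℕ) : poch2 (m + 1) = poch2 m * (1 - q ^ (2 * (m + 1))) :=
  Finset.prod_range_succ _ m

lemma succ_choose_two (n : ℕ) : (n + 1).choose 2 = n + n.choose 2 := by
  rw [Nat.choose_succ_succ', Nat.choose_one_right]

lemma coeff_Jcal_two_mul_add_one (m : ℕ) :
    coeff (2 * m + 1) Jcal = -q ^ (2 * m) * coeff (2 * m) Jcal := by
  rw [Jcal, coeff_mk, coeff_mk, succ_choose_two, show (2 * m + 1 + 1) / 2 = m + 1 by omega,
    show (2 * m + 1) / 2 = m by omega, show 2 * m / 2 = m by omega]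
  ring

lemma coeff_Jcal_two_mul_add_two (m : ℕ) :
    (1 - q ^ (2 * m + 2)) * coeff (2 * m + 2) Jcal = q ^ (2 * m + 1) * coeff (2 * m + 1) Jcal := by
  have hne : (1 : K) - q ^ (2 * (m + 1)) ≠ 0 := one_sub_q_pow_ne_zero (by omega)
  rw [Jcal, coeff_mk, coeff_mk, succ_choose_two, show (2 * m + 2 + 1) / 2 = m + 1 by omega,
    show (2 * m + 1 + 1) / 2 = m + 1 by omega, show (2 * m + 1) / 2 = m by omega, poch2_succ, show 2 * m + 2 = 2 * (m + 1) by ring]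
  field_simp
  ring

lemma coeff_Jcal_recurrence (k : ℕ) :
    (-q) ^ (k + 1) * coeff (k + 1) Jcal - 2 * ((-q) ^ k * coeff k Jcal) =
      (2 - q ^ (k + 1)) * coeff (k + 1) Jcal := by
  obtain ⟨m, rfl | rfl⟩ := Nat.even_or_odd' k
  · rw [coeff_Jcal_two_mul_add_one, neg_pow, neg_pow q, pow_succ, (even_two_mul m).neg_one_pow]
    ring
  · rw [show 2 * m + 1 + 1 = 2 * m + 2 by ring, neg_pow, neg_pow q,
      (odd_two_mul_add_one m).neg_one_pow, Even.neg_one_pow ⟨m + 1, by ring⟩]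
    linear_combination -2 * coeff_Jcal_two_mul_add_two m

/-- `(1-2x)·𝒥(-xq) = 2·𝒥(x) - 𝒥(xq)`. -/
theorem stmt8 :
    (1 - 2 * PowerSeries.X) * rescale (-q) Jcal = 2 * Jcal - rescale q Jcal := by
  ext (_ | k)
  all_goals simp only [sub_mul, one_mul, two_mul, add_mul, map_sub, map_add, coeff_rescale]
  · simp
  · simp only [coeff_succ_X_mul, coeff_rescale]
    linear_combination coeff_Jcal_recurrence k

end FC
end
end

section
/- Iterating the functional equation A(s) = 1/(1-xsq) + (x/((1-sq)(1-xsq)))·A(1) - (xsq/((1-sq)(1-xsq)))·A(sq) yields A(s) = Σ_{n≥0} ((-xs)^n q^{n(n+1)/2} / ((sq;q)_n (xsq;q)_n)) · (1/(1-xsq^{n+1}) + (x/((1-sq^{n+1})(1-xsq^{n+1})))·A(1)), as formal power series in x. -/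
open PowerSeries

noncomputable section
namespace FC

/-- The field `ℚ(q)(s)` of rational functions in `s` over `ℚ(q)`. -/
abbrev S : Type := RatFunc K

/-- The variable `s`. -/
def sS : S := RatFunc.X

/-- `q` as an element of `ℚ(q)(s)`. -/
def qS : S := RatFunc.C q

/-- A power series in `x` over `ℚ(q)(s)` has coefficients polynomial in `s`
(and hence in `s` and `q`, up to denominators in `q` alone). -/
def PolyCoeffs (A : PowerSeries S) : Prop :=
  ∀ n, (PowerSeries.coeff n A).denom = 1

/-- Evaluation of a rational function of `s` at `s = 1`. -/
def ev1 (f : S) : K := RatFunc.eval (RingHom.id K) 1 f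

/-- `A(1)`: evaluate each coefficient at `s = 1`, giving a power series in `x` over `ℚ(q)`. -/
def atOneK (A : PowerSeries S) : PowerSeries K :=
  PowerSeries.mk fun n => ev1 (PowerSeries.coeff n A)

/-- `A(1)`, lifted back to a power series over `ℚ(q)(s)`. -/
def atOne (A : PowerSeries S) : PowerSeries S :=
  PowerSeries.mk fun n => RatFunc.C (ev1 (PowerSeries.coeff n A))

/-- Substitution `s ↦ s·q^j` in each coefficient. -/
def atSq (j : ℕ) (A : PowerSeries S) : PowerSeries S :=
  PowerSeries.mk fun n =>
    RatFunc.eval (RatFunc.C : K →+* S) (RatFunc.C (q ^ j) * RatFunc.X)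
      (PowerSeries.coeff n A)

/-- The q-Pochhammer symbol `(a; q)_n = ∏_{i=0}^{n-1} (1 - a q^i)` in `ℚ(q)(s)`. -/
def pochS (a : S) (n : ℕ) : S := ∏ i ∈ Finset.range n, (1 - a * qS ^ i)

/-- The power series `(x s q^{t}; q)_n = ∏_{i=0}^{n-1} (1 - s q^{t+i} x)` in `x` over `ℚ(q)(s)`. -/
def pochXs (t n : ℕ) : PowerSeries S :=
  ∏ i ∈ Finset.range n, (1 - PowerSeries.C (sS * qS ^ (t + i)) * PowerSeries.X)

/-- The inner factor `1/(1-xsq^{n+1}) + (x/((1-sq^{n+1})(1-xsq^{n+1})))·A(1)`. -/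
def inner15 (n : ℕ) (A : PowerSeries S) : PowerSeries S :=
  (1 - PowerSeries.C (sS * qS ^ (n + 1)) * PowerSeries.X)⁻¹
    + PowerSeries.X * PowerSeries.C ((1 - sS * qS ^ (n + 1))⁻¹) *
        (1 - PowerSeries.C (sS * qS ^ (n + 1)) * PowerSeries.X)⁻¹ * atOne A

/-!
The functional equation has the shape `A = a + b · σ A`, where `σ` is the substitution
`s ↦ s q` acting on the coefficients. Applying `σ^n` and substituting repeatedly gives
`A = Σ_{n<m} (b · σb ⋯ σ^{n-1}b) · σ^n a + (b · σb ⋯ σ^{m-1}b) · σ^m A`. Here `σ^n a` is the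
inner factor with `q^{n+1}`, and `b · σb ⋯ σ^{n-1}b` equals
`(-xs)^n q^{n(n+1)/2} / ((sq;q)_n (xsq;q)_n)`, which is divisible by `x^n`; so for `m = N + 1`
the remainder does not contribute to the coefficient of `x^N`.
-/

section Dilate

variable {F : Type*} [Field F]

theorem RatFunc.ringHom_ext {L : Type*} [Field L] {f g : RatFunc F →+* L}
    (hC : ∀ a, f (RatFunc.C a) = g (RatFunc.C a)) (hX : f RatFunc.X = g RatFunc.X) : f = g :=
  IsFractionRing.ringHom_ext (A := Polynomial F) fun p => by
    induction p using Polynomial.induction_on' with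
    | add p p' hp hp' => simp only [map_add, hp, hp']
    | monomial n a =>
      rw [← Polynomial.C_mul_X_pow_eq_monomial]
      simp only [map_mul, map_pow, RatFunc.algebraMap_C, RatFunc.algebraMap_X, hC, hX]

def dilate (c : F) (hc : c ≠ 0) : RatFunc F →+* RatFunc F :=
  RatFunc.liftRingHom
    ((algebraMap (Polynomial F) (RatFunc F)).comp
      (Polynomial.compRingHom (Polynomial.C c * Polynomial.X)))
    fun p hp => by
      simpa [mem_nonZeroDivisors_iff_ne_zero,
        Polynomial.comp_C_mul_X_eq_zero_iff (isUnit_iff_ne_zero.mpr hc).mem_nonZeroDivisors]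
        using hp

variable {c : F} (hc : c ≠ 0)

theorem dilate_algebraMap (p : Polynomial F) :
    dilate c hc (algebraMap _ _ p) = algebraMap _ _ (p.comp (Polynomial.C c * Polynomial.X)) := by
  simp [dilate]

@[simp] theorem dilate_C (a : F) : dilate c hc (RatFunc.C a) = RatFunc.C a := by
  rw [← RatFunc.algebraMap_C, dilate_algebraMap, Polynomial.C_comp]

@[simp] theorem dilate_X : dilate c hc RatFunc.X = RatFunc.C c * RatFunc.X := by
  rw [← RatFunc.algebraMap_X, dilate_algebraMap, Polynomial.X_comp, map_mul,
    RatFunc.algebraMap_C, RatFunc.algebraMap_X]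

theorem dilate_one : dilate (1 : F) one_ne_zero = RingHom.id _ :=
  RatFunc.ringHom_ext (by simp) (by simp)

theorem dilate_mul {d : F} (hd : d ≠ 0) :
    dilate (c * d) (mul_ne_zero hc hd) = (dilate c hc).comp (dilate d hd) :=
  RatFunc.ringHom_ext (by simp) (by simp; ring)

theorem dilate_pow (n : ℕ) : dilate (c ^ n) (pow_ne_zero n hc) = dilate c hc ^ n := by
  induction n with
  | zero =>
    simp only [pow_zero]
    exact dilate_one
  | succ n ih =>
    simp only [pow_succ]
    rw [dilate_mul (pow_ne_zero n hc) hc, ih]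
    rfl

theorem eval_C_mul_X_eq_dilate (f : RatFunc F) :
    RatFunc.eval RatFunc.C (RatFunc.C c * RatFunc.X) f = dilate c hc f := by
  rw [RatFunc.eval, dilate, RatFunc.liftRingHom_apply]
  have hcomp (p : Polynomial F) : p.eval₂ RatFunc.C (RatFunc.C c * RatFunc.X) =
      algebraMap _ (RatFunc F) (p.comp (Polynomial.C c * Polynomial.X)) := by
    rw [Polynomial.comp, Polynomial.hom_eval₂, map_mul, RatFunc.algebraMap_C, RatFunc.algebraMap_X]
    rfl
  simp only [hcomp]
  rfl

end Dilate

theorem PowerSeries.map_inv {k l : Type*} [Field k] [Field l] (f : k →+* l) (φ : PowerSeries k) :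
    PowerSeries.map f φ⁻¹ = (PowerSeries.map f φ)⁻¹ := by
  have hmap : constantCoeff (PowerSeries.map f φ) = f (constantCoeff φ) := by
    rw [← coeff_zero_eq_constantCoeff_apply, coeff_map, coeff_zero_eq_constantCoeff_apply]
  by_cases hφ : constantCoeff φ = 0
  · rw [PowerSeries.inv_eq_zero.mpr hφ, PowerSeries.inv_eq_zero.mpr (by rw [hmap, hφ, map_zero]),
      map_zero]
  · rw [eq_comm, PowerSeries.inv_eq_iff_mul_eq_one (by rwa [hmap, map_ne_zero]), ← map_mul,
      PowerSeries.inv_mul_cancel _ hφ, map_one]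

theorem PowerSeries.prod_inv {ι k : Type*} [Field k] (s : Finset ι) (f : ι → PowerSeries k) :
    ∏ i ∈ s, (f i)⁻¹ = (∏ i ∈ s, f i)⁻¹ := by
  classical
  induction s using Finset.induction_on with
  | empty => simp
  | insert i s hi ih => rw [Finset.prod_insert hi, Finset.prod_insert hi, ih, mul_comm,
      PowerSeries.mul_inv_rev]

theorem coeff_C_mul_X_pow_mul {R : Type*} [Semiring R] (a : R) (n N : ℕ) (φ : PowerSeries R) :
    coeff N (C a * X ^ n * φ) = if n ≤ N then a * coeff (N - n) φ else 0 := by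
  rw [mul_assoc, coeff_C_mul, coeff_X_pow_mul']
  split_ifs <;> simp

theorem eq_sum_add_of_eq_add_mul {R : Type*} [CommSemiring R] (T : R →+* R) {A a b : R}
    (h : A = a + b * T A) (m : ℕ) :
    A = ∑ n ∈ Finset.range m, (∏ i ∈ Finset.range n, (T ^ i) b) * (T ^ n) a
      + (∏ i ∈ Finset.range m, (T ^ i) b) * (T ^ m) A := by
  induction m with
  | zero => simp
  | succ m ih =>
    have hm : (T ^ m) A = (T ^ m) a + (T ^ m) b * (T ^ (m + 1)) A := by
      conv_lhs => rw [h]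
      rw [map_add, map_mul, pow_succ, RingHom.coe_mul, Function.comp_apply]
    conv_lhs => rw [ih, hm]
    rw [Finset.sum_range_succ, Finset.prod_range_succ]
    ring

theorem prod_range_mul_pow_succ {M : Type*} [CommMonoid M] (a b : M) (n : ℕ) :
    ∏ i ∈ Finset.range n, a * b ^ (i + 1) = a ^ n * b ^ (n * (n + 1) / 2) := by
  have hsum : ∑ i ∈ Finset.range n, (i + 1) = n * (n + 1) / 2 := by
    have h := Finset.sum_range_succ' (fun i => i) n
    rw [add_zero, Finset.sum_range_id, Nat.add_sub_cancel, mul_comm] at h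
    exact h.symm
  rw [Finset.prod_mul_distrib, Finset.prod_const, Finset.card_range, Finset.prod_pow_eq_pow_sum,
    hsum]

theorem q_ne_zero : q ≠ 0 := RatFunc.X_ne_zero

def σ : S →+* S := dilate q q_ne_zero

theorem σ_pow (j : ℕ) : σ ^ j = dilate (q ^ j) (pow_ne_zero j q_ne_zero) :=
  (dilate_pow q_ne_zero j).symm

theorem σ_pow_C (j : ℕ) (a : K) : (σ ^ j) (RatFunc.C a) = RatFunc.C a := by
  rw [σ_pow, dilate_C]

theorem σ_pow_sS_mul_qS_pow (j k : ℕ) : (σ ^ j) (sS * qS ^ k) = sS * qS ^ (j + k) := by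
  rw [σ_pow, map_mul, map_pow, sS, qS, dilate_X, dilate_C, map_pow]
  ring

theorem atSq_eq_map (j : ℕ) (A : PowerSeries S) : atSq j A = map (σ ^ j) A := by
  ext n
  rw [atSq, coeff_mk, coeff_map, eval_C_mul_X_eq_dilate (pow_ne_zero j q_ne_zero), σ_pow]

theorem map_σ_pow (j : ℕ) : PowerSeries.map σ ^ j = PowerSeries.map (σ ^ j) := by
  induction j with
  | zero => exact RingHom.ext fun φ => by ext; simp [RingHom.one_def]
  | succ j ih => rw [pow_succ, ih, pow_succ]; exact (PowerSeries.map_comp _ _).symm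

theorem map_atOne (j : ℕ) (A : PowerSeries S) : map (σ ^ j) (atOne A) = atOne A := by
  ext n
  simp only [atOne, coeff_map, coeff_mk, σ_pow_C]

theorem map_inner15 (j n : ℕ) (A : PowerSeries S) :
    map (σ ^ j) (inner15 n A) = inner15 (j + n) A := by
  simp only [inner15, map_add, map_mul (PowerSeries.map (σ ^ j)), PowerSeries.map_inv, map_sub,
    map_one, map_C, map_X, map_inv₀, σ_pow_sS_mul_qS_pow, map_atOne, add_assoc]

-- The coefficient of `A(s q^{n+1})` in the functional equation with `s` replaced by `s q^n`.
def iterFactor (n : ℕ) : PowerSeries S :=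
  C (-(sS * qS ^ (n + 1)) / (1 - sS * qS ^ (n + 1))) * X *
    (1 - C (sS * qS ^ (n + 1)) * X)⁻¹

theorem map_iterFactor (j n : ℕ) : map (σ ^ j) (iterFactor n) = iterFactor (j + n) := by
  simp only [iterFactor, map_mul (PowerSeries.map (σ ^ j)), PowerSeries.map_inv, map_sub,
    map_one, map_C, map_X, map_div₀, map_neg, σ_pow_sS_mul_qS_pow, add_assoc]

theorem prod_one_sub_sS_mul_qS_pow (n : ℕ) :
    ∏ i ∈ Finset.range n, (1 - sS * qS ^ (i + 1)) = pochS (sS * qS) n :=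
  Finset.prod_congr rfl fun i _ => by ring

theorem prod_inv_one_sub_C_mul_X (n : ℕ) :
    ∏ i ∈ Finset.range n, (1 - C (sS * qS ^ (i + 1)) * X)⁻¹ = (pochXs 1 n)⁻¹ := by
  rw [PowerSeries.prod_inv, pochXs]
  simp_rw [add_comm 1]

theorem prod_iterFactor (n : ℕ) :
    ∏ i ∈ Finset.range n, iterFactor i
      = C ((-sS) ^ n * qS ^ (n * (n + 1) / 2) / pochS (sS * qS) n) * X ^ n * (pochXs 1 n)⁻¹ := by
  simp only [iterFactor, Finset.prod_mul_distrib, ← map_prod, Finset.prod_const,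
    Finset.card_range, Finset.prod_div_distrib, prod_one_sub_sS_mul_qS_pow,
    prod_inv_one_sub_C_mul_X]
  simp_rw [neg_mul_eq_neg_mul]
  rw [prod_range_mul_pow_succ]

theorem stmt15_general (A : PowerSeries S)
    (hA : A = (1 - PowerSeries.C (sS * qS) * PowerSeries.X)⁻¹
        + PowerSeries.X * PowerSeries.C ((1 - sS * qS)⁻¹) *
            (1 - PowerSeries.C (sS * qS) * PowerSeries.X)⁻¹ * atOne A
        - PowerSeries.C (sS * qS) * PowerSeries.X * PowerSeries.C ((1 - sS * qS)⁻¹) *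
            (1 - PowerSeries.C (sS * qS) * PowerSeries.X)⁻¹ * atSq 1 A) :
    ∀ N, PowerSeries.coeff N A
      = ∑ n ∈ Finset.range (N + 1),
          ((-sS) ^ n * qS ^ (n * (n + 1) / 2) / pochS (sS * qS) n) *
            PowerSeries.coeff (N - n) ((pochXs 1 n)⁻¹ * inner15 n A) := by
  have hfix : A = inner15 0 A + iterFactor 0 * map σ A := by
    conv_lhs => rw [hA]
    rw [← pow_one σ, ← atSq_eq_map]
    simp only [inner15, iterFactor, zero_add, pow_one, div_eq_mul_inv, map_neg, map_mul]
    ring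
  intro N
  have key := eq_sum_add_of_eq_add_mul (map σ) hfix (N + 1)
  simp only [map_σ_pow, map_iterFactor, map_inner15, add_zero, prod_iterFactor] at key
  conv_lhs => rw [key]
  rw [map_add, map_sum]
  simp only [mul_assoc (C _ * X ^ _), coeff_C_mul_X_pow_mul]
  rw [if_neg (by omega), add_zero]
  exact Finset.sum_congr rfl fun n hn => if_pos (Nat.lt_succ_iff.mp (Finset.mem_range.mp hn))

/-- If `A(s)` (with coefficients polynomial in `s` and `q`) satisfies
`A(s) = 1/(1-xsq) + (x/((1-sq)(1-xsq)))·A(1) - (xsq/((1-sq)(1-xsq)))·A(sq)`, then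
`A(s) = Σ_{n≥0} ((-xs)^n q^{n(n+1)/2}/((sq;q)_n (xsq;q)_n)) ·
(1/(1-xsq^{n+1}) + (x/((1-sq^{n+1})(1-xsq^{n+1})))·A(1))`,
the sum being taken coefficientwise in `x` (the `n`-th term has `x`-order at least `n`). -/
theorem stmt15 (A : PowerSeries S) (hpoly : PolyCoeffs A)
    (hA : A = (1 - PowerSeries.C (sS * qS) * PowerSeries.X)⁻¹
        + PowerSeries.X * PowerSeries.C ((1 - sS * qS)⁻¹) *
            (1 - PowerSeries.C (sS * qS) * PowerSeries.X)⁻¹ * atOne A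
        - PowerSeries.C (sS * qS) * PowerSeries.X * PowerSeries.C ((1 - sS * qS)⁻¹) *
            (1 - PowerSeries.C (sS * qS) * PowerSeries.X)⁻¹ * atSq 1 A) :
    ∀ N, PowerSeries.coeff N A
      = ∑ n ∈ Finset.range (N + 1),
          ((-sS) ^ n * qS ^ (n * (n + 1) / 2) / pochS (sS * qS) n) *
            PowerSeries.coeff (N - n) ((pochXs 1 n)⁻¹ * inner15 n A) :=
  stmt15_general A hA

end FC
end
end

section
/- The double-sum rearrangement Σ_{n≥0} ((-xs)^n q^{n(n+1)/2} / ((sq;q)_n (xsq;q)_n)) · (1 + Σ_{m≥1} (xsq^n)^m q^{m(m+1)/2} / (xsq^{n+1};q)_m) equals Σ_{N≥0} ((xs)^N q^{N(N+1)/2} / (xsq;q)_N) · Σ_{n=0}^{N} (-1)^n/(sq;q)_n, as formal power series in x and s over Q(q). -/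
open PowerSeries

noncomputable section
namespace FC

/-- The ring `ℚ(q)[[s]]` of formal power series in `s`; our series in `x` and `s`
are formal power series in `x` with coefficients in this ring. -/
abbrev R0 : Type := PowerSeries K

/-- `s` as an element of the coefficient ring. -/
def sv : R0 := PowerSeries.X

/-- `q` as an element of the coefficient ring. -/
def qC : R0 := PowerSeries.C q

/-- `(s q^t; q)_n = ∏_{i=0}^{n-1} (1 - q^{t+i} s)`, a power series in `s`. -/
def pochsK (t n : ℕ) : R0 :=
  ∏ i ∈ Finset.range n, (1 - PowerSeries.C (q ^ (t + i)) * PowerSeries.X)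

/-- `(x s q^t; q)_n = ∏_{i=0}^{n-1} (1 - s q^{t+i} x)`, a power series in `x` over `ℚ(q)[[s]]`. -/
def pochxs (t n : ℕ) : PowerSeries R0 :=
  ∏ i ∈ Finset.range n, (1 - PowerSeries.C (sv * qC ^ (t + i)) * PowerSeries.X)

/-- The inner factor `1 + Σ_{m≥1} (xsq^n)^m q^{m(m+1)/2}/(xsq^{n+1};q)_m`,
defined coefficientwise in `x`. -/
def inner18 (n : ℕ) : PowerSeries R0 :=
  PowerSeries.mk fun M =>
    (if M = 0 then 1 else 0)
      + ∑ m ∈ Finset.Icc 1 M,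
          (sv ^ m * qC ^ (n * m + m * (m + 1) / 2)) *
            PowerSeries.coeff (M - m) ((pochxs (n + 1) m).invOfUnit 1)

/-- The left-hand side
`Σ_{n≥0} ((-xs)^n q^{n(n+1)/2}/((sq;q)_n (xsq;q)_n)) · (1 + Σ_{m≥1} (xsq^n)^m q^{m(m+1)/2}/(xsq^{n+1};q)_m)`,
defined coefficientwise in `x` (the `n`-th term has `x`-order at least `n`). -/
def lhs18 : PowerSeries R0 :=
  PowerSeries.mk fun N =>
    ∑ n ∈ Finset.range (N + 1),
      ((-sv) ^ n * qC ^ (n * (n + 1) / 2) * (pochsK 1 n)⁻¹) *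
        PowerSeries.coeff (N - n) ((pochxs 1 n).invOfUnit 1 * inner18 n)

/-- The right-hand side
`Σ_{N≥0} ((xs)^N q^{N(N+1)/2}/(xsq;q)_N) · Σ_{n=0}^{N} (-1)^n/(sq;q)_n`,
defined coefficientwise in `x`. -/
def rhs18 : PowerSeries R0 :=
  PowerSeries.mk fun M =>
    ∑ N ∈ Finset.range (M + 1),
      (sv ^ N * qC ^ (N * (N + 1) / 2) *
          ∑ n ∈ Finset.range (N + 1), (-1 : R0) ^ n * (pochsK 1 n)⁻¹) *
        PowerSeries.coeff (M - N) ((pochxs 1 N).invOfUnit 1)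

/-!
Expanding the inner factor, the `(n, m)` term of the left side is
`(-1)^n/(sq;q)_n · (xs)^N q^{N(N+1)/2}/(xsq;q)_N` with `N = n + m`, because
`q^{n(n+1)/2} q^{nm} q^{m(m+1)/2} = q^{N(N+1)/2}` and `(xsq;q)_n (xsq^{n+1};q)_m = (xsq;q)_N`.
Collecting the terms with fixed `N` gives the right side.
-/

open Finset

theorem coeff_mul_eq_sum_of_coeff_eq_sum {R : Type*} [CommSemiring R] {A B : R⟦X⟧}
    {c : ℕ → R} {F : ℕ → R⟦X⟧}
    (hB : ∀ M, coeff M B = ∑ m ∈ range (M + 1), c m * coeff (M - m) (F m)) (b : ℕ) :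
    coeff b (A * B) = ∑ m ∈ range (b + 1), c m * coeff (b - m) (A * F m) := by
  set S : R⟦X⟧ := ∑ m ∈ range (b + 1), C (c m) * (X ^ m * F m)
  have coeff_S : ∀ j ≤ b, coeff j S = ∑ m ∈ range (j + 1), c m * coeff (j - m) (F m) := by
    intro j hj
    simp only [S, map_sum, coeff_C_mul, coeff_X_pow_mul', mul_ite, mul_zero]
    rw [← sum_subset (range_subset_range.2 (by omega : j + 1 ≤ b + 1))
      (fun m _ hm => if_neg (by simpa [Nat.lt_succ_iff] using hm))]
    exact sum_congr rfl fun m hm => if_pos (by simpa [Nat.lt_succ_iff] using hm)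
  have trunc_B : trunc (b + 1) B = trunc (b + 1) S := by
    ext j
    simp only [coeff_trunc]
    split_ifs with hj
    · rw [hB, coeff_S j (by omega)]
    · rfl
  calc coeff b (A * B) = coeff b (A * S) := by
        rw [coeff_mul_eq_coeff_trunc_mul_trunc _ _ (lt_add_one b), trunc_B,
          ← coeff_mul_eq_coeff_trunc_mul_trunc _ _ (lt_add_one b)]
    _ = _ := by
        simp only [S, mul_sum, map_sum, mul_left_comm A, coeff_C_mul, coeff_X_pow_mul']
        exact sum_congr rfl fun m hm => by rw [if_pos (by simpa [Nat.lt_succ_iff] using hm)]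

theorem invOfUnit_mul_invOfUnit {R : Type*} [CommRing R] {φ ψ : R⟦X⟧}
    (hφ : constantCoeff φ = 1) (hψ : constantCoeff ψ = 1) :
    φ.invOfUnit 1 * ψ.invOfUnit 1 = (φ * ψ).invOfUnit 1 := by
  have hφψ : constantCoeff (φ * ψ) = ((1 : Rˣ) : R) := by simp [hφ, hψ]
  refine (left_inv_eq_right_inv (invOfUnit_mul _ _ hφψ) ?_).symm
  rw [mul_mul_mul_comm, mul_invOfUnit _ _ (by simpa using hφ),
    mul_invOfUnit _ _ (by simpa using hψ), one_mul]

theorem triangle_add (n m : ℕ) :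
    n * (n + 1) / 2 + (n * m + m * (m + 1) / 2) = (n + m) * (n + m + 1) / 2 := by
  have hn := Nat.div_mul_cancel (Nat.even_mul_succ_self n).two_dvd
  have hm := Nat.div_mul_cancel (Nat.even_mul_succ_self m).two_dvd
  refine (Nat.div_eq_of_eq_mul_left two_pos ?_).symm
  nlinarith

theorem constantCoeff_pochxs (t n : ℕ) : constantCoeff (pochxs t n) = 1 := by
  simp [pochxs, map_prod]

theorem pochxs_mul_pochxs (t n m : ℕ) : pochxs t n * pochxs (t + n) m = pochxs t (n + m) := by
  simp only [pochxs, prod_range_add, add_assoc]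

theorem invOfUnit_pochxs_mul (t n m : ℕ) :
    (pochxs t n).invOfUnit 1 * (pochxs (t + n) m).invOfUnit 1 = (pochxs t (n + m)).invOfUnit 1 := by
  rw [invOfUnit_mul_invOfUnit (constantCoeff_pochxs t n) (constantCoeff_pochxs (t + n) m),
    pochxs_mul_pochxs]

theorem coeff_inner18 (n M : ℕ) :
    coeff M (inner18 n) = ∑ m ∈ range (M + 1),
      sv ^ m * qC ^ (n * m + m * (m + 1) / 2) * coeff (M - m) ((pochxs (n + 1) m).invOfUnit 1) := by
  have inv_zero : (pochxs (n + 1) 0).invOfUnit 1 = 1 := by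
    simpa [pochxs] using mul_invOfUnit (1 : R0⟦X⟧) 1 (by simp)
  rw [inner18, coeff_mk, range_eq_Ico, sum_eq_sum_Ico_succ_bot (show 0 < M + 1 by omega), zero_add,
    Ico_add_one_right_eq_Icc]
  simp [inv_zero, coeff_one]

theorem coeff_invOfUnit_pochxs_mul_inner18 (n b : ℕ) :
    coeff b ((pochxs 1 n).invOfUnit 1 * inner18 n) = ∑ m ∈ range (b + 1),
      sv ^ m * qC ^ (n * m + m * (m + 1) / 2) * coeff (b - m) ((pochxs 1 (n + m)).invOfUnit 1) := by
  rw [coeff_mul_eq_sum_of_coeff_eq_sum (coeff_inner18 n)]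
  refine sum_congr rfl fun m _ => ?_
  rw [add_comm n 1, invOfUnit_pochxs_mul]

/-- The double-sum rearrangement used in the enumeration of alternating heaps of type B. -/
theorem stmt18 : lhs18 = rhs18 := by
  refine PowerSeries.ext fun N => ?_
  rw [lhs18, rhs18, coeff_mk, coeff_mk]
  set T : ℕ → ℕ → R0 := fun n k => (-1) ^ n * (pochsK 1 n)⁻¹ *
    (sv ^ k * qC ^ (k * (k + 1) / 2) * coeff (N - k) ((pochxs 1 k).invOfUnit 1))
  calc _ = ∑ n ∈ range (N + 1), ∑ m ∈ range (N + 1 - n), T n (n + m) := by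
        refine sum_congr rfl fun n hn => ?_
        rw [coeff_invOfUnit_pochxs_mul_inner18, mul_sum,
          show N - n + 1 = N + 1 - n by have := mem_range.1 hn; omega]
        refine sum_congr rfl fun m _ => ?_
        simp only [T]
        rw [← triangle_add, Nat.sub_sub, neg_pow, pow_add, pow_add]
        ring
    _ = ∑ k ∈ range (N + 1), ∑ n ∈ range (k + 1), T n k := by
        rw [← sum_range_diag_flip]
        refine sum_congr rfl fun k _ => sum_congr rfl fun n hn => ?_
        rw [Nat.add_sub_cancel' (by simpa [Nat.lt_succ_iff] using hn)]
    _ = _ := by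
        refine sum_congr rfl fun k _ => ?_
        simp only [T, ← sum_mul]
        ring

end FC
end
end
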